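/- For every integer n ≥ 1 and every ε ∈ (0,1), there exists a finite collection N of ordered product bases of (ℂ²)^{⊗n} such that |N| ≤ (5(2√2 + 1)²n²/ε²)^{8n} and for every ordered product basis β of (ℂ²)^{⊗n} there is some γ ∈ N with ‖β − γ‖_B ≤ ε. -/

import Mathlib

noncomputable section
open scoped BigOperators Classical ComplexOrder

/-- The standard inner product, conjugate-linear in the first argument. -/
def qInner {I : Type*} [Fintype I] (ψ φ : I → ℂ) : ℂ :=
  ∑ x, (starRingEnd ℂ) (ψ x) * φ x

/-- The trace norm `‖M‖₁ = tr √(MᴴM)` of a complex square matrix. -/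
def traceNorm {I : Type*} [Fintype I] [DecidableEq I] (M : Matrix I I ℂ) : ℝ :=
  (((Matrix.posSemidef_conjTranspose_mul_self M).1.eigenvectorUnitary : Matrix I I ℂ) *
    Matrix.diagonal ((fun x : ℝ => (x : ℂ)) ∘ (√·) ∘ (Matrix.posSemidef_conjTranspose_mul_self M).1.eigenvalues) *
    (star (Matrix.posSemidef_conjTranspose_mul_self M).1.eigenvectorUnitary : Matrix I I ℂ)).trace.re

/-- The rank-one outer product `|u⟩⟨u| = u u†` of a vector. -/
def outerP {I : Type*} (u : I → ℂ) : Matrix I I ℂ :=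
  Matrix.of fun i j => u i * (starRingEnd ℂ) (u j)

/-- The basis norm `‖β − γ‖_B = max_i ‖|βᵢ⟩⟨βᵢ| − |γᵢ⟩⟨γᵢ|‖₁` between two ordered
families of vectors with the same index set. -/
def basisNormP {I J : Type*} [Fintype J] [DecidableEq J] (β γ : I → (J → ℂ)) : ℝ :=
  ⨆ i, traceNorm (outerP (β i) - outerP (γ i))

/-- The ordered product basis of `(ℂ²)^{⊗n}` built from single-qubit ordered bases
`b k`, the element indexed by the bitstring `idx` being the tensor product of the
`idx k`-th elements of the `b k`. -/
def prodBasis {n : ℕ} (b : Fin n → Bool → Bool → ℂ) :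
    (Fin n → Bool) → ((Fin n → Bool) → ℂ) :=
  fun idx x => ∏ k, b k (idx k) (x k)

/-- `β` is an ordered product basis of `(ℂ²)^{⊗n}`: it is induced by single-qubit
ordered orthonormal bases. -/
def IsProductBasis {n : ℕ} (β : (Fin n → Bool) → ((Fin n → Bool) → ℂ)) : Prop :=
  ∃ b : Fin n → Bool → Bool → ℂ,
    (∀ k, ∀ i j : Bool, qInner (b k i) (b k j) = if i = j then 1 else 0) ∧
    β = prodBasis b

set_option maxHeartbeats 1000000

open Matrix Finset in
lemma traceNorm_eq {I : Type*} [Fintype I] [DecidableEq I] (M : Matrix I I ℂ) :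
    traceNorm M = ∑ i, Real.sqrt ((Matrix.posSemidef_conjTranspose_mul_self M).1.eigenvalues i) := by
  set hP := Matrix.posSemidef_conjTranspose_mul_self M
  rw [traceNorm, Matrix.trace_mul_cycle]
  rw [Matrix.UnitaryGroup.star_mul_self, one_mul, Matrix.trace_diagonal]
  rw [Complex.re_sum]
  simp

open Matrix Finset in
lemma trace_conj_re {I : Type*} [Fintype I] [DecidableEq I] (M : Matrix I I ℂ) :
    ((Mᴴ * M).trace).re = ∑ i, (Matrix.posSemidef_conjTranspose_mul_self M).1.eigenvalues i := by
  set hP := Matrix.posSemidef_conjTranspose_mul_self M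
  conv_lhs => rw [hP.1.spectral_theorem, Unitary.conjStarAlgAut_apply]
  rw [Matrix.trace_mul_cycle, Matrix.UnitaryGroup.star_mul_self, one_mul, Matrix.trace_diagonal]
  rw [Complex.re_sum]
  simp

open Matrix Finset in
lemma matrix_rank_add_le {I : Type*} [Fintype I] [DecidableEq I] (A B : Matrix I I ℂ) :
    (A + B).rank ≤ A.rank + B.rank := by
  have h : LinearMap.range (A + B).mulVecLin ≤
      LinearMap.range A.mulVecLin ⊔ LinearMap.range B.mulVecLin := by
    rintro x ⟨y, rfl⟩
    rw [Matrix.mulVecLin_add]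
    exact Submodule.mem_sup.2 ⟨_, ⟨y, rfl⟩, _, ⟨y, rfl⟩, rfl⟩
  exact (Submodule.finrank_mono h).trans
    (Submodule.finrank_add_le_finrank_add_finrank _ _)

open Matrix Finset in
lemma rank_prod_le_one {I : Type*} [Fintype I] [DecidableEq I] (w x : I → ℂ) :
    (Matrix.of fun i j => w i * x j : Matrix I I ℂ).rank ≤ 1 := by
  have h : (Matrix.of fun i j => w i * x j : Matrix I I ℂ) =
      (Matrix.replicateCol Unit w) * (Matrix.replicateRow Unit x) := by
    ext i j
    simp [Matrix.mul_apply, Matrix.replicateCol, Matrix.replicateRow]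
  rw [h]
  refine (Matrix.rank_mul_le_left _ _).trans ?_
  simpa using (Matrix.replicateCol Unit w).rank_le_card_width

open Matrix Finset in
lemma rank_outerP_sub_le {I : Type*} [Fintype I] [DecidableEq I] (u v : I → ℂ) :
    (outerP u - outerP v).rank ≤ 2 := by
  have h : outerP u - outerP v =
      (Matrix.of fun i j => u i * (starRingEnd ℂ) (u j)) +
      (Matrix.of fun i j => (-(v i)) * (starRingEnd ℂ) (v j)) := by
    ext i j
    simp [outerP]
    ring
  rw [h]
  exact (matrix_rank_add_le _ _).trans
    (add_le_add (rank_prod_le_one _ _) (rank_prod_le_one _ _))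

open Matrix Finset in
lemma traceNorm_le_sqrt {I : Type*} [Fintype I] [DecidableEq I] (M : Matrix I I ℂ)
    (r : ℕ) (hr : M.rank ≤ r) :
    traceNorm M ≤ Real.sqrt (r * ((Mᴴ * M).trace).re) := by
  set hP := Matrix.posSemidef_conjTranspose_mul_self M with hPdef
  set lam := hP.1.eigenvalues with hlam
  have hnn : ∀ i, 0 ≤ lam i := hP.eigenvalues_nonneg
  set s : Finset I := Finset.univ.filter (fun i => lam i ≠ 0) with hs
  have hcard : s.card ≤ r := by
    have h1 : (Mᴴ * M).rank = Fintype.card {i // lam i ≠ 0} :=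
      hP.1.rank_eq_card_non_zero_eigs
    have h2 : Fintype.card {i // lam i ≠ 0} = s.card := Fintype.card_subtype _
    have h3 : (Mᴴ * M).rank = M.rank := Matrix.rank_conjTranspose_mul_self M
    omega
  have hsum : ∑ i, Real.sqrt (lam i) = ∑ i ∈ s, Real.sqrt (lam i) := by
    refine (Finset.sum_subset (Finset.filter_subset _ _) ?_).symm
    intro i _ hi
    simp only [hs, Finset.mem_filter, Finset.mem_univ, true_and, not_not] at hi
    simp [hi]
  have hCS : (∑ i ∈ s, Real.sqrt (lam i)) ^ 2 ≤ s.card * ∑ i ∈ s, (Real.sqrt (lam i)) ^ 2 :=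
    sq_sum_le_card_mul_sum_sq
  have hsq : ∑ i ∈ s, (Real.sqrt (lam i)) ^ 2 = ∑ i ∈ s, lam i := by
    refine Finset.sum_congr rfl fun i _ => Real.sq_sqrt (hnn i)
  have hle : ∑ i ∈ s, lam i ≤ ∑ i, lam i :=
    Finset.sum_le_sum_of_subset_of_nonneg (Finset.subset_univ s) fun i _ _ => hnn i
  have htn : traceNorm M = ∑ i ∈ s, Real.sqrt (lam i) := by
    rw [traceNorm_eq M, ← hsum]
  have hnn2 : 0 ≤ traceNorm M := by
    rw [htn]; exact Finset.sum_nonneg fun i _ => Real.sqrt_nonneg _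
  rw [trace_conj_re M]
  rw [show (∑ i, (Matrix.posSemidef_conjTranspose_mul_self M).1.eigenvalues i) = ∑ i, lam i from rfl]
  rw [← Real.sqrt_sq hnn2]
  apply Real.sqrt_le_sqrt
  rw [htn]
  calc (∑ i ∈ s, Real.sqrt (lam i)) ^ 2 ≤ s.card * ∑ i ∈ s, lam i := by
        rw [← hsq]; exact hCS
    _ ≤ r * ∑ i, lam i := by
        apply mul_le_mul (by exact_mod_cast hcard) hle
          (Finset.sum_nonneg fun i _ => hnn i) (by positivity)

open Matrix Finset in
lemma trace_outerP_sub {I : Type*} [Fintype I] [DecidableEq I] (u v : I → ℂ)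
    (hu : qInner u u = 1) (hv : qInner v v = 1) :
    (((outerP u - outerP v)ᴴ * (outerP u - outerP v)).trace).re
      = 2 - 2 * Complex.normSq (qInner u v) := by
  set M : Matrix I I ℂ := outerP u - outerP v with hM
  set z : ℂ := qInner u v with hz
  have cu : ∑ i, u i * (starRingEnd ℂ) (u i) = 1 := by
    have := congrArg (starRingEnd ℂ) hu
    simpa [qInner, map_sum, mul_comm] using this
  have cv : ∑ i, v i * (starRingEnd ℂ) (v i) = 1 := by
    have := congrArg (starRingEnd ℂ) hv
    simpa [qInner, map_sum, mul_comm] using this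
  have cuv : ∑ i, u i * (starRingEnd ℂ) (v i) = (starRingEnd ℂ) z := by
    rw [hz]
    simp [qInner, map_sum, mul_comm]
  have cvu : ∑ i, v i * (starRingEnd ℂ) (u i) = z := by
    rw [hz]
    simp [qInner, map_sum, mul_comm]
  have htr : (Mᴴ * M).trace = ∑ i, ∑ j, (starRingEnd ℂ) (M j i) * M j i := by
    simp [Matrix.trace, Matrix.mul_apply, Matrix.conjTranspose_apply, Matrix.diag]
  have key : ∀ i j : I, (starRingEnd ℂ) (M j i) * M j i =
      ((starRingEnd ℂ) (u j) * u j) * (u i * (starRingEnd ℂ) (u i))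
      + ((starRingEnd ℂ) (v j) * v j) * (v i * (starRingEnd ℂ) (v i))
      - ((starRingEnd ℂ) (u j) * v j) * (u i * (starRingEnd ℂ) (v i))
      - ((starRingEnd ℂ) (v j) * u j) * (v i * (starRingEnd ℂ) (u i)) := by
    intro i j
    simp only [hM, Matrix.sub_apply, outerP, Matrix.of_apply, map_sub, _root_.map_mul,
      Complex.conj_conj]
    ring
  have hsum : (Mᴴ * M).trace = 2 - (starRingEnd ℂ) z * z - z * (starRingEnd ℂ) z := by
    rw [htr]
    have : ∀ i : I, ∑ j, (starRingEnd ℂ) (M j i) * M j i =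
        (u i * (starRingEnd ℂ) (u i)) + (v i * (starRingEnd ℂ) (v i))
        - z * (u i * (starRingEnd ℂ) (v i)) - (starRingEnd ℂ) z * (v i * (starRingEnd ℂ) (u i)) := by
      intro i
      rw [Finset.sum_congr rfl fun j _ => key i j]
      rw [Finset.sum_sub_distrib, Finset.sum_sub_distrib, Finset.sum_add_distrib,
        ← Finset.sum_mul, ← Finset.sum_mul, ← Finset.sum_mul, ← Finset.sum_mul]
      rw [show (∑ j, (starRingEnd ℂ) (u j) * u j) = 1 by
            rw [← hu]; exact Finset.sum_congr rfl fun j _ => rfl,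
          show (∑ j, (starRingEnd ℂ) (v j) * v j) = 1 by
            rw [← hv]; exact Finset.sum_congr rfl fun j _ => rfl,
          show (∑ j, (starRingEnd ℂ) (u j) * v j) = z from rfl,
          show (∑ j, (starRingEnd ℂ) (v j) * u j) = (starRingEnd ℂ) z by
            rw [hz]; simp [qInner, map_sum]; exact Finset.sum_congr rfl fun j _ => by ring]
      ring
    rw [Finset.sum_congr rfl fun i _ => this i]
    rw [Finset.sum_sub_distrib, Finset.sum_sub_distrib, Finset.sum_add_distrib,
      ← Finset.mul_sum, ← Finset.mul_sum, cu, cv, cuv, cvu]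
    ring
  rw [hsum]
  have : (starRingEnd ℂ) z * z = (Complex.normSq z : ℂ) := by
    rw [mul_comm]; exact Complex.mul_conj z
  rw [this, show z * (starRingEnd ℂ) z = (Complex.normSq z : ℂ) from Complex.mul_conj z]
  simp
  ring

open Matrix Finset in
lemma qInner_prodBasis {n : ℕ} (b c : Fin n → Bool → Bool → ℂ) (idx : Fin n → Bool) :
    qInner (prodBasis b idx) (prodBasis c idx)
      = ∏ k, qInner (b k (idx k)) (c k (idx k)) := by
  unfold qInner prodBasis
  rw [eq_comm]
  calc ∏ k, ∑ j, (starRingEnd ℂ) (b k (idx k) j) * c k (idx k) j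
      = ∑ x ∈ Fintype.piFinset (fun _ : Fin n => (Finset.univ : Finset Bool)),
          ∏ k, (starRingEnd ℂ) (b k (idx k) (x k)) * c k (idx k) (x k) := by
        rw [Finset.prod_univ_sum]
    _ = ∑ x : Fin n → Bool, ∏ k, (starRingEnd ℂ) (b k (idx k) (x k)) * c k (idx k) (x k) := by
        rw [Fintype.piFinset_univ]
    _ = ∑ x : Fin n → Bool,
          (starRingEnd ℂ) (∏ k, b k (idx k) (x k)) * ∏ k, c k (idx k) (x k) := by
        refine Finset.sum_congr rfl fun x _ => ?_
        rw [map_prod, Finset.prod_mul_distrib]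

-- sum of normSq equals one for unit vectors

lemma sum_normSq_eq_one {I : Type*} [Fintype I] (u : I → ℂ) (hu : qInner u u = 1) :
    ∑ x, Complex.normSq (u x) = 1 := by
  have : qInner u u = ((∑ x, Complex.normSq (u x) : ℝ) : ℂ) := by
    rw [qInner, Complex.ofReal_sum]
    exact Finset.sum_congr rfl fun x _ => by
      rw [mul_comm]; exact (Complex.mul_conj (u x))
  rw [hu] at this
  exact_mod_cast this.symm

lemma normSq_qInner_le_one {I : Type*} [Fintype I] (u v : I → ℂ)
    (hu : qInner u u = 1) (hv : qInner v v = 1) :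
    Complex.normSq (qInner u v) ≤ 1 := by
  have habs : ‖qInner u v‖ ≤ ∑ x, ‖u x‖ * ‖v x‖ := by
    refine (norm_sum_le _ _).trans ?_
    refine le_of_eq (Finset.sum_congr rfl fun x _ => ?_)
    rw [norm_mul]
    simp
  have hCS : (∑ x, ‖u x‖ * ‖v x‖) ^ 2
      ≤ (∑ x, ‖u x‖ ^ 2) * (∑ x, ‖v x‖ ^ 2) :=
    Finset.sum_mul_sq_le_sq_mul_sq _ _ _
  have hu2 : (∑ x, ‖u x‖ ^ 2) = 1 := by
    rw [← sum_normSq_eq_one u hu]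
    exact Finset.sum_congr rfl fun x _ => Complex.sq_norm _
  have hv2 : (∑ x, ‖v x‖ ^ 2) = 1 := by
    rw [← sum_normSq_eq_one v hv]
    exact Finset.sum_congr rfl fun x _ => Complex.sq_norm _
  rw [hu2, hv2, mul_one] at hCS
  have h0 : 0 ≤ ∑ x, ‖u x‖ * ‖v x‖ :=
    Finset.sum_nonneg fun x _ => mul_nonneg (norm_nonneg _) (norm_nonneg _)
  rw [← Complex.sq_norm]
  nlinarith [norm_nonneg (qInner u v)]

lemma one_sub_prod_le {κ : Type*} (s : Finset κ) (a : κ → ℝ)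
    (h0 : ∀ k ∈ s, 0 ≤ a k) (h1 : ∀ k ∈ s, a k ≤ 1) :
    1 - ∏ k ∈ s, a k ≤ ∑ k ∈ s, (1 - a k) := by
  induction s using Finset.cons_induction with
  | empty => simp
  | cons i s hi ih =>
    rw [Finset.prod_cons, Finset.sum_cons]
    have hp1 : ∏ k ∈ s, a k ≤ 1 :=
      Finset.prod_le_one (fun k hk => h0 k (Finset.mem_cons_of_mem hk))
        (fun k hk => h1 k (Finset.mem_cons_of_mem hk))
    have hp0 : 0 ≤ ∏ k ∈ s, a k :=
      Finset.prod_nonneg fun k hk => h0 k (Finset.mem_cons_of_mem hk)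
    have hih := ih (fun k hk => h0 k (Finset.mem_cons_of_mem hk))
      (fun k hk => h1 k (Finset.mem_cons_of_mem hk))
    have hai0 := h0 i (Finset.mem_cons_self i s)
    have hai1 := h1 i (Finset.mem_cons_self i s)
    nlinarith

lemma qubit_bound (u v : Bool → ℂ) (hu : qInner u u = 1) (hv : qInner v v = 1)
    (δ : ℝ) (hδ : 0 ≤ δ) (h : ∀ j, ‖u j - v j‖ ≤ δ) :
    1 - Complex.normSq (qInner u v) ≤ 2 * δ ^ 2 := by
  set z := qInner u v with hz
  have hre : 2 - 2 * z.re = ∑ j, Complex.normSq (u j - v j) := by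
    have expand : ∀ j, Complex.normSq (u j - v j)
        = Complex.normSq (u j) + Complex.normSq (v j) - 2 * ((starRingEnd ℂ) (u j) * v j).re := by
      intro j
      rw [Complex.normSq_sub]
      have : (u j * (starRingEnd ℂ) (v j)).re = ((starRingEnd ℂ) (u j) * v j).re := by
        simp [Complex.mul_re, Complex.conj_re, Complex.conj_im]
        try ring
      rw [this]
    rw [Finset.sum_congr rfl fun j _ => expand j]
    rw [Finset.sum_sub_distrib, Finset.sum_add_distrib,
      sum_normSq_eq_one u hu, sum_normSq_eq_one v hv]
    have : ∑ j, 2 * ((starRingEnd ℂ) (u j) * v j).re = 2 * z.re := by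
      rw [← Finset.mul_sum, hz, qInner, Complex.re_sum]
    rw [this]
    norm_num
  have hS : ∑ j, Complex.normSq (u j - v j) ≤ 2 * δ ^ 2 := by
    have : ∀ j : Bool, Complex.normSq (u j - v j) ≤ δ ^ 2 := by
      intro j
      rw [← Complex.sq_norm]
      exact pow_le_pow_left₀ (norm_nonneg _) (h j) 2
    calc ∑ j, Complex.normSq (u j - v j) ≤ ∑ _j : Bool, δ ^ 2 :=
          Finset.sum_le_sum fun j _ => this j
      _ = 2 * δ ^ 2 := by simp [Fintype.card_bool]
  have hresq : z.re ^ 2 ≤ Complex.normSq z := by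
    rw [Complex.normSq_apply]; nlinarith [sq_nonneg z.im]
  nlinarith [hresq]

lemma key_bound {n : ℕ} (b c : Fin n → Bool → Bool → ℂ)
    (hb : ∀ k, ∀ i j : Bool, qInner (b k i) (b k j) = if i = j then 1 else 0)
    (hc : ∀ k, ∀ i j : Bool, qInner (c k i) (c k j) = if i = j then 1 else 0)
    (δ : ℝ) (hδ : 0 ≤ δ)
    (hbc : ∀ k i j, ‖b k i j - c k i j‖ ≤ δ) (idx : Fin n → Bool) :
    traceNorm (outerP (prodBasis b idx) - outerP (prodBasis c idx))
      ≤ Real.sqrt (8 * n * δ ^ 2) := by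
  set u := prodBasis b idx with hu'
  set v := prodBasis c idx with hv'
  have hu : qInner u u = 1 := by
    rw [hu', qInner_prodBasis]
    simp [hb]
  have hv : qInner v v = 1 := by
    rw [hv', qInner_prodBasis]
    simp [hc]
  have h1 := traceNorm_le_sqrt (outerP u - outerP v) 2 (rank_outerP_sub_le u v)
  rw [trace_outerP_sub u v hu hv] at h1
  refine h1.trans (Real.sqrt_le_sqrt ?_)
  set a : Fin n → ℝ := fun k => Complex.normSq (qInner (b k (idx k)) (c k (idx k))) with ha
  have hns : Complex.normSq (qInner u v) = ∏ k, a k := by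
    rw [hu', hv', qInner_prodBasis]
    exact map_prod Complex.normSq _ _
  have hbk : ∀ k, qInner (b k (idx k)) (b k (idx k)) = 1 := fun k => by simpa using hb k (idx k) (idx k)
  have hck : ∀ k, qInner (c k (idx k)) (c k (idx k)) = 1 := fun k => by simpa using hc k (idx k) (idx k)
  have h0 : ∀ k ∈ Finset.univ, 0 ≤ a k := fun k _ => Complex.normSq_nonneg _
  have h1' : ∀ k ∈ Finset.univ, a k ≤ 1 := fun k _ =>
    normSq_qInner_le_one _ _ (hbk k) (hck k)
  have hqb : ∀ k ∈ (Finset.univ : Finset (Fin n)), 1 - a k ≤ 2 * δ ^ 2 := fun k _ =>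
    qubit_bound _ _ (hbk k) (hck k) δ hδ (fun j => hbc k (idx k) j)
  have hprod : 1 - ∏ k, a k ≤ (n : ℝ) * (2 * δ ^ 2) := by
    refine (one_sub_prod_le Finset.univ a h0 h1').trans ?_
    calc ∑ k, (1 - a k) ≤ ∑ _k : Fin n, 2 * δ ^ 2 := Finset.sum_le_sum hqb
      _ = (n : ℝ) * (2 * δ ^ 2) := by simp [Finset.sum_const, Finset.card_univ]
  rw [hns]
  push_cast
  nlinarith

lemma ortho_std {n : ℕ} : ∀ (k : Fin n) (i j : Bool),
    qInner ((fun (_ : Fin n) (i j : Bool) => if i = j then (1:ℂ) else 0) k i)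
           ((fun (_ : Fin n) (i j : Bool) => if i = j then (1:ℂ) else 0) k j)
      = if i = j then 1 else 0 := by
  intro k i j
  cases i <;> cases j <;> simp [qInner, Fintype.sum_bool]

/-- rounding a real to the 1-D net -/
def roundR (S : Finset ℝ) (η : ℝ) (t : ℝ) : ℝ :=
  if h : ∃ s ∈ S, |t - s| ≤ η then h.choose else -1

lemma roundR_mem {S : Finset ℝ} (hS : (-1:ℝ) ∈ S) (η t : ℝ) : roundR S η t ∈ S := by
  unfold roundR
  split
  · next h => exact h.choose_spec.1
  · exact hS

lemma roundR_close {S : Finset ℝ} {η t : ℝ} (h : ∃ s ∈ S, |t - s| ≤ η) :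
    |t - roundR S η t| ≤ η := by
  unfold roundR
  rw [dif_pos h]
  exact h.choose_spec.2

/-- picking an orthonormal family near a grid point -/
def pickB (n : ℕ) (δ0 : ℝ) (g : Fin n → Bool → Bool → ℂ) : Fin n → Bool → Bool → ℂ :=
  if h : ∃ b : Fin n → Bool → Bool → ℂ,
      (∀ k, ∀ i j : Bool, qInner (b k i) (b k j) = if i = j then 1 else 0) ∧
      (∀ k i j, ‖b k i j - g k i j‖ ≤ δ0)
  then h.choose else (fun _ i j => if i = j then 1 else 0)

lemma pickB_ortho (n : ℕ) (δ0 : ℝ) (g : Fin n → Bool → Bool → ℂ) :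
    ∀ k, ∀ i j : Bool, qInner (pickB n δ0 g k i) (pickB n δ0 g k j) = if i = j then 1 else 0 := by
  unfold pickB
  split
  · next h => exact h.choose_spec.1
  · exact ortho_std

lemma pickB_close (n : ℕ) (δ0 : ℝ) (g : Fin n → Bool → Bool → ℂ)
    (h : ∃ b : Fin n → Bool → Bool → ℂ,
      (∀ k, ∀ i j : Bool, qInner (b k i) (b k j) = if i = j then 1 else 0) ∧
      (∀ k i j, ‖b k i j - g k i j‖ ≤ δ0)) :
    ∀ k i j, ‖pickB n δ0 g k i j - g k i j‖ ≤ δ0 := by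
  unfold pickB
  rw [dif_pos h]
  exact h.choose_spec.2

theorem product_basis_net (n : ℕ) (hn : 1 ≤ n) (ε : ℝ) (hε0 : 0 < ε) (hε1 : ε < 1) :
    ∃ 𝒩 : Finset ((Fin n → Bool) → ((Fin n → Bool) → ℂ)),
      ((𝒩.card : ℝ) ≤ (5 * (2 * Real.sqrt 2 + 1) ^ 2 * n ^ 2 / ε ^ 2) ^ (8 * n)) ∧
      (∀ γ ∈ 𝒩, IsProductBasis γ) ∧
      ∀ β : (Fin n → Bool) → ((Fin n → Bool) → ℂ), IsProductBasis β →
        ∃ γ ∈ 𝒩, basisNormP β γ ≤ ε := by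
  have hn' : (1:ℝ) ≤ n := by exact_mod_cast hn
  have hnpos : (0:ℝ) < n := by linarith
  set η : ℝ := ε / (16 * n) with hη
  have hηpos : 0 < η := by positivity
  set m : ℕ := ⌈1 / η⌉₊ with hm
  -- the 1-D net
  set S : Finset ℝ := (Finset.range (m+1)).image (fun j : ℕ => -1 + 2*η*(j:ℝ)) with hS
  have hneg1S : (-1 : ℝ) ∈ S := by
    refine Finset.mem_image.2 ⟨0, by simp, by simp⟩
  have cover : ∀ t : ℝ, -1 ≤ t → t ≤ 1 → ∃ s ∈ S, |t - s| ≤ 2*η := by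
    intro t ht1 ht2
    set j : ℕ := ⌊(t+1)/(2*η)⌋₊ with hj
    have hjle : (j:ℝ) ≤ (t+1)/(2*η) :=
      Nat.floor_le (div_nonneg (by linarith) (by positivity))
    have hjlt : (t+1)/(2*η) < j + 1 := Nat.lt_floor_add_one _
    have hjm : j ≤ m := by
      have h1 : (t+1)/(2*η) ≤ 1/η := by
        rw [div_le_div_iff₀ (by positivity) (by positivity)]
        nlinarith
      have h2 : (j:ℝ) ≤ (m:ℝ) := (hjle.trans h1).trans (Nat.le_ceil _)
      exact_mod_cast h2
    refine ⟨-1 + 2*η*(j:ℝ), Finset.mem_image.2 ⟨j, Finset.mem_range.2 (by omega), rfl⟩, ?_⟩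
    rw [abs_le]
    have hmul1 : (j:ℝ)*(2*η) ≤ t+1 := (le_div_iff₀ (by positivity)).1 hjle
    have hmul2 : t+1 < ((j:ℝ)+1)*(2*η) := (div_lt_iff₀ (by positivity)).1 hjlt
    constructor <;> nlinarith
  -- complex net
  set SC : Finset ℂ := (S ×ˢ S).image (fun p => (⟨p.1, p.2⟩ : ℂ)) with hSC
  have hroundCS : ∀ w : ℂ, (⟨roundR S (2*η) w.re, roundR S (2*η) w.im⟩ : ℂ) ∈ SC := by
    intro w
    exact Finset.mem_image.2 ⟨(roundR S (2*η) w.re, roundR S (2*η) w.im),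
      Finset.mem_product.2 ⟨roundR_mem hneg1S _ _, roundR_mem hneg1S _ _⟩, rfl⟩
  set δ0 : ℝ := Real.sqrt (8 * η^2) with hδ0
  have hδ0nn : 0 ≤ δ0 := Real.sqrt_nonneg _
  have habsround : ∀ w : ℂ, ‖w‖ ≤ 1 →
      ‖w - (⟨roundR S (2*η) w.re, roundR S (2*η) w.im⟩ : ℂ)‖ ≤ δ0 := by
    intro w hw
    have hre : |w.re| ≤ 1 := (Complex.abs_re_le_norm w).trans hw
    have him : |w.im| ≤ 1 := (Complex.abs_im_le_norm w).trans hw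
    have h1 : |w.re - roundR S (2*η) w.re| ≤ 2*η :=
      roundR_close (cover w.re (abs_le.1 hre).1 (abs_le.1 hre).2)
    have h2 : |w.im - roundR S (2*η) w.im| ≤ 2*η :=
      roundR_close (cover w.im (abs_le.1 him).1 (abs_le.1 him).2)
    rw [Complex.norm_def, hδ0]
    apply Real.sqrt_le_sqrt
    rw [Complex.normSq_apply]
    have a1 := abs_le.1 h1
    have a2 := abs_le.1 h2
    simp only [Complex.sub_re, Complex.sub_im]
    nlinarith
  -- grid of coefficient functions
  set G : Finset (Fin n → Bool → Bool → ℂ) :=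
    Fintype.piFinset (fun _ : Fin n =>
      Fintype.piFinset (fun _ : Bool => Fintype.piFinset (fun _ : Bool => SC))) with hG
  refine ⟨G.image (fun g => prodBasis (pickB n δ0 g)), ?_, ?_, ?_⟩
  · -- cardinality
    have h1 : (G.image (fun g => prodBasis (pickB n δ0 g))).card ≤ G.card :=
      Finset.card_image_le
    have hScard : S.card ≤ m + 1 := by
      refine Finset.card_image_le.trans ?_
      simp
    have hSCcard : SC.card ≤ (m+1)^2 := by
      refine Finset.card_image_le.trans ?_
      rw [Finset.card_product]
      calc S.card * S.card ≤ (m+1) * (m+1) := Nat.mul_le_mul hScard hScard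
        _ = (m+1)^2 := by ring
    have hGcard : G.card ≤ (m+1)^(8*n) := by
      rw [hG, Fintype.card_piFinset]
      calc ∏ _k : Fin n, (Fintype.piFinset (fun _ : Bool =>
              Fintype.piFinset (fun _ : Bool => SC))).card
          ≤ ∏ _k : Fin n, (m+1)^8 := by
            refine Finset.prod_le_prod' fun k _ => ?_
            rw [Fintype.card_piFinset]
            calc ∏ _i : Bool, (Fintype.piFinset (fun _ : Bool => SC)).card
                ≤ ∏ _i : Bool, (m+1)^4 := by
                  refine Finset.prod_le_prod' fun i _ => ?_
                  rw [Fintype.card_piFinset]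
                  calc ∏ _j : Bool, SC.card ≤ ∏ _j : Bool, (m+1)^2 :=
                        Finset.prod_le_prod' fun j _ => hSCcard
                    _ = (m+1)^4 := by rw [Finset.prod_const, Finset.card_univ,
                          Fintype.card_bool, ← pow_mul]
              _ = (m+1)^8 := by rw [Finset.prod_const, Finset.card_univ,
                    Fintype.card_bool, ← pow_mul]
        _ = (m+1)^(8*n) := by rw [Finset.prod_const, Finset.card_univ, Fintype.card_fin,
              ← pow_mul, mul_comm]
    have hcast : ((G.image (fun g => prodBasis (pickB n δ0 g))).card : ℝ)
        ≤ ((m:ℝ)+1)^(8*n) := by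
      have h2 := h1.trans hGcard
      exact_mod_cast h2
    refine hcast.trans ?_
    have hsqrt2 : (1:ℝ) ≤ Real.sqrt 2 := by
      rw [show (1:ℝ) = Real.sqrt 1 by simp]
      exact Real.sqrt_le_sqrt (by norm_num)
    have hK : ((m:ℝ)+1) ≤ 5 * (2 * Real.sqrt 2 + 1) ^ 2 * n ^ 2 / ε ^ 2 := by
      have hmlt : (m:ℝ) < 1/η + 1 := Nat.ceil_lt_add_one (by positivity)
      have h1η : 1/η = 16*n/ε := by
        rw [hη]; field_simp
      rw [le_div_iff₀ (by positivity)]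
      have hle : ((m:ℝ)+1) ≤ 16*n/ε + 2 := by rw [← h1η]; linarith
      refine (mul_le_mul_of_nonneg_right hle (by positivity)).trans ?_
      have h16 : (16*n/ε + 2) * ε^2 = 16*n*ε + 2*ε^2 := by field_simp
      rw [h16]
      nlinarith [sq_nonneg (Real.sqrt 2 - 1), sq_nonneg ((n:ℝ) - 1),
        Real.sq_sqrt (by norm_num : (0:ℝ) ≤ 2), mul_pos hnpos hnpos]
    exact pow_le_pow_left₀ (by positivity) hK _
  · -- product bases
    intro γ hγ
    obtain ⟨g, _, rfl⟩ := Finset.mem_image.1 hγ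
    exact ⟨pickB n δ0 g, pickB_ortho n δ0 g, rfl⟩
  · -- coverage
    rintro β ⟨b, hb, rfl⟩
    set g : Fin n → Bool → Bool → ℂ :=
      fun k i j => (⟨roundR S (2*η) (b k i j).re, roundR S (2*η) (b k i j).im⟩ : ℂ) with hg
    have hentry : ∀ k i j, ‖b k i j‖ ≤ 1 := by
      intro k i j
      have h1 : qInner (b k i) (b k i) = 1 := by simpa using hb k i i
      have h2 := sum_normSq_eq_one (b k i) h1
      have h3 : Complex.normSq (b k i j) ≤ 1 := by
        rw [← h2]
        exact Finset.single_le_sum (fun x _ => Complex.normSq_nonneg _) (Finset.mem_univ j)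
      rw [← Real.sqrt_one, Complex.norm_def]
      exact Real.sqrt_le_sqrt h3
    have hgG : g ∈ G := by
      rw [hG, Fintype.mem_piFinset]
      intro k
      rw [Fintype.mem_piFinset]
      intro i
      rw [Fintype.mem_piFinset]
      intro j
      exact hroundCS _
    have hbg : ∀ k i j, ‖b k i j - g k i j‖ ≤ δ0 :=
      fun k i j => habsround _ (hentry k i j)
    have hex : ∃ b' : Fin n → Bool → Bool → ℂ,
        (∀ k, ∀ i j : Bool, qInner (b' k i) (b' k j) = if i = j then 1 else 0) ∧
        (∀ k i j, ‖b' k i j - g k i j‖ ≤ δ0) := ⟨b, hb, hbg⟩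
    have hcO := pickB_ortho n δ0 g
    have hcg := pickB_close n δ0 g hex
    have hbc : ∀ k i j, ‖b k i j - pickB n δ0 g k i j‖ ≤ 2*δ0 := by
      intro k i j
      calc ‖b k i j - pickB n δ0 g k i j‖
          ≤ ‖b k i j - g k i j‖ + ‖g k i j - pickB n δ0 g k i j‖ :=
            norm_sub_le_norm_sub_add_norm_sub _ _ _
        _ ≤ δ0 + δ0 := by
            refine add_le_add (hbg k i j) ?_
            rw [← norm_neg]
            simpa [neg_sub] using hcg k i j
        _ = 2*δ0 := by ring
    refine ⟨prodBasis (pickB n δ0 g), Finset.mem_image.2 ⟨g, hgG, rfl⟩, ?_⟩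
    rw [basisNormP]
    refine ciSup_le fun idx => ?_
    refine (key_bound b (pickB n δ0 g) hb hcO (2*δ0) (by positivity) hbc idx).trans ?_
    have hδ0sq : δ0^2 = 8*η^2 := Real.sq_sqrt (by positivity)
    have harg : 8 * (n:ℝ) * (2*δ0)^2 ≤ ε^2 := by
      have he : 8 * (n:ℝ) * (2*δ0)^2 = 256 * n * η^2 := by rw [mul_pow]; nlinarith [hδ0sq]
      rw [he, hη, div_pow]
      have h2 : 256 * (n:ℝ) * (ε^2/(16*n)^2) = ε^2/n := by
        field_simp
        ring
      rw [h2]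
      calc ε^2/(n:ℝ) ≤ ε^2/1 := by
            apply div_le_div_of_nonneg_left (sq_nonneg ε) one_pos hn'
        _ = ε^2 := by ring
    refine (Real.sqrt_le_sqrt harg).trans ?_
    rw [Real.sqrt_sq hε0.le]
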